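/- Let E be a Hausdorff topological space, n a natural number, and F₀,…,Fₙ closed subsets of E. Then for every ordinal α, (⋃_{k=0}^n F_k)^(α) = ⋃_{k=0}^n F_k^(α). -/

import Mathlib

/-- The Cantor-Bendixson derivative of a set, by transfinite recursion. -/
noncomputable def cbDeriv {X : Type*} [TopologicalSpace X] (A : Set X) (o : Ordinal) : Set X :=
  Ordinal.limitRecOn o A (fun _ ih => derivedSet ih)
    (fun o _ ih => ⋂ (b : Set.Iio o), ih b.1 b.2)

/-- `IsCB A α p` : the Cantor-Bendixson characteristic of `A` is `(α, p)`,
i.e. `α` is the least ordinal with `A^(α)` finite, and `p = |A^(α)|`. -/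
def IsCB {X : Type*} [TopologicalSpace X] (A : Set X) (α : Ordinal) (p : ℕ) : Prop :=
  (cbDeriv A α).Finite ∧ (∀ β < α, ¬ (cbDeriv A β).Finite) ∧ (cbDeriv A α).ncard = p

/-!
Taking derived sets commutes with finite unions, which gives the successor step. In a T1 space
derived sets are closed, so the derivatives of a closed set decrease; at a limit `λ` it remains
to distribute a decreasing intersection over the directed set `Iio λ` across a finite union.
-/

section DerivedSet

variable {X : Type*} [TopologicalSpace X]

lemma derivedSet_empty : derivedSet (∅ : Set X) = ∅ :=
  Set.subset_empty_iff.mp (by simpa using derivedSet_subset_closure (∅ : Set X))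

lemma derivedSet_biUnion_finset {ι : Type*} (s : Finset ι) (S : ι → Set X) :
    derivedSet (⋃ i ∈ s, S i) = ⋃ i ∈ s, derivedSet (S i) := by
  classical
  induction s using Finset.induction_on with
  | empty => simp [derivedSet_empty]
  | insert i s _ ih => simp only [Finset.set_biUnion_insert, derivedSet_union, ih]

lemma derivedSet_iUnion_of_finite {ι : Type*} [Finite ι] (S : ι → Set X) :
    derivedSet (⋃ i, S i) = ⋃ i, derivedSet (S i) := by
  cases nonempty_fintype ι
  simpa using derivedSet_biUnion_finset Finset.univ S

end DerivedSet

section CantorBendixson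

variable {X : Type*} [TopologicalSpace X]

lemma cbDeriv_zero (A : Set X) : cbDeriv A 0 = A :=
  Ordinal.limitRecOn_zero ..

lemma cbDeriv_add_one (A : Set X) (o : Ordinal) :
    cbDeriv A (o + 1) = derivedSet (cbDeriv A o) :=
  Ordinal.limitRecOn_add_one ..

lemma cbDeriv_limit (A : Set X) {o : Ordinal} (ho : Order.IsSuccLimit o) :
    cbDeriv A o = ⋂ b : Set.Iio o, cbDeriv A b.1 :=
  Ordinal.limitRecOn_limit _ _ _ _ ho

variable [T1Space X] {A : Set X}

lemma isClosed_cbDeriv (hA : IsClosed A) (o : Ordinal) : IsClosed (cbDeriv A o) := by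
  induction o using Ordinal.limitRecOn with
  | zero => rwa [cbDeriv_zero]
  | add_one o _ => rw [cbDeriv_add_one]; exact isClosed_derivedSet _
  | limit o ho ih => rw [cbDeriv_limit A ho]; exact isClosed_iInter fun b => ih b.1 b.2

lemma cbDeriv_antitone (hA : IsClosed A) : Antitone (cbDeriv A) := by
  intro b a hba
  induction a using Ordinal.limitRecOn with
  | zero => rw [nonpos_iff_eq_zero.mp hba]
  | add_one o ih =>
    rcases hba.lt_or_eq with hbo | rfl
    · rw [cbDeriv_add_one]
      exact ((isClosed_iff_derivedSet_subset _).mp (isClosed_cbDeriv hA o)).trans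
        (ih (Order.lt_add_one_iff.mp hbo))
    · exact subset_rfl
  | limit o ho _ =>
    rcases hba.eq_or_lt with rfl | hbo
    · exact subset_rfl
    · rw [cbDeriv_limit A ho]
      exact Set.iInter_subset (fun c : Set.Iio o => cbDeriv A c.1) ⟨b, hbo⟩

lemma cbDeriv_iUnion_of_finite {ι : Type*} [Finite ι] {F : ι → Set X}
    (hF : ∀ i, IsClosed (F i)) (o : Ordinal) :
    cbDeriv (⋃ i, F i) o = ⋃ i, cbDeriv (F i) o := by
  induction o using Ordinal.limitRecOn with
  | zero => simp only [cbDeriv_zero]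
  | add_one o ih => simp only [cbDeriv_add_one, ih, derivedSet_iUnion_of_finite]
  | limit o ho ih =>
    have : Nonempty (Set.Iio o) := ⟨⟨0, ho.bot_lt⟩⟩
    simp only [cbDeriv_limit _ ho]
    rw [Set.iInter_congr fun b : Set.Iio o => ih b.1 b.2]
    exact Set.iInter_iUnion_of_antitone fun i b c hbc => cbDeriv_antitone (hF i) hbc

end CantorBendixson

theorem stmt9 {E : Type*} [TopologicalSpace E] [T2Space E] (n : ℕ)
    (F : Fin (n + 1) → Set E) (hF : ∀ k, IsClosed (F k)) (α : Ordinal) :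
    cbDeriv (⋃ k, F k) α = ⋃ k, cbDeriv (F k) α :=
  cbDeriv_iUnion_of_finite hF α
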